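/- arXiv:2012.10897 — 3 statements merged into one kernel-verified Lean document; each statement's English description precedes it below -/
import Mathlib

section
/- For each n ≥ 1 let p_f(i), p_e(i) ∈ [0,1] (1 ≤ i ≤ n) with p_f(i)+p_e(i) ≤ 1, and set μ_f(n) = Σ_{i=1}^n p_f(i) and μ_e(n) = Σ_{i=1}^n p_e(i). Assume min(μ_f(n), μ_e(n)) → ∞ as n → ∞ and p := limsup_n (2μ_f(n)+μ_e(n))/n < 1/2. Let α satisfy H(p) < α ≤ 1, and let {D_n} be any sequence of dictionaries D_n ⊆ {0,1}^n with #D_n ≥ 2^{αn}. Then every rate 0 < R < α − H(p) is achievable using these dictionaries: for every ε > 0 and all sufficiently large n, there exist a code C_n ⊆ D_n with #C_n ≥ 2^{nR} and a decoder g_n : {0,1,e}^n → C_n such that max_{x ∈ C_n} P(g_n(Y(x)) ≠ x) < ε. -/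
open scoped Classical BigOperators

/-- The binary entropy function `H(x) = -x log₂ x - (1-x) log₂ (1-x)`. -/
noncomputable def binEnt (x : ℝ) : ℝ :=
  -(x * Real.logb 2 x) - (1 - x) * Real.logb 2 (1 - x)

/-- Probability of the noise vector `w : Fin n → Option Bool`, where `some true`
means the bit is substituted (`W_i = 1`), `none` means it is erased (`W_i = e`)
and `some false` means it passes unchanged (`W_i = 0`). -/
noncomputable def noiseProb {n : ℕ} (pf pe : Fin n → ℝ) (w : Fin n → Option Bool) : ℝ :=
  ∏ i, (if w i = some true then pf i else if w i = none then pe i else 1 - pf i - pe i)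

/-- Channel output `Y(x) ∈ {0,1,e}^n` on input word `x ∈ {0,1}^n` under noise `w`:
`Y_i = x_i` if `W_i = 0`, `Y_i = 1 - x_i` if `W_i = 1`, and `Y_i = e` if `W_i = e`. -/
def chOut {n : ℕ} (x : Fin n → Bool) (w : Fin n → Option Bool) : Fin n → Option Bool :=
  fun i =>
    match w i with
    | some b => some (xor (x i) b)
    | none => none

/-- Error probability `P(g(Y(x)) ≠ x)` of a decoder `g` on the transmitted word `x`. -/
noncomputable def errProb {n : ℕ} (pf pe : Fin n → ℝ)
    (g : (Fin n → Option Bool) → (Fin n → Bool)) (x : Fin n → Bool) : ℝ :=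
  ∑ w ∈ Finset.univ.filter (fun w : Fin n → Option Bool => g (chOut x w) ≠ x),
    noiseProb pf pe w

/-!
Fix `δ` with `p < δ < 1/2` and `H(δ) < α - R`, and let `d = ⌊δn⌋ + 1`. Greedily extract from `D_n`
a code of minimum Hamming distance `d`: every chosen word discards at most
`∑_{k<d} C(n,k) ≤ 2^{H(δ)n}` words, so at least `2^{(α - H(δ))n} ≥ 2^{nR}` words are chosen.
Charge 2 for a flip and 1 for an erasure, and decode `y` to a codeword at cost `< d` from it.
Two such codewords would be at Hamming distance `< d`, so decoding succeeds as soon as the noise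
costs less than `d`. That cost is a sum of independent variables with values in `[0, 2]` and mean
`2μ_f + μ_e < p'n` with `p < p' < δ` for large `n`, so by Chebyshev the error probability is at
most `4n / ((δ - p')n)^2 → 0`.
-/

open Finset Filter Topology

theorem card_hammingDist_lt_le {n : ℕ} (x : Fin n → Bool) (d : ℕ) :
    #{z | hammingDist x z < d} ≤ ∑ k ∈ range d, n.choose k := by
  let flipOn : Finset (Fin n) → Fin n → Bool := fun s i => xor (x i) (decide (i ∈ s))
  have hcover : ({z | hammingDist x z < d} : Finset (Fin n → Bool)) ⊆
      ((range d).biUnion fun k => powersetCard k univ).image flipOn := by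
    intro z hz
    rw [mem_filter] at hz
    refine mem_image.2 ⟨({i | x i ≠ z i} : Finset (Fin n)), ?_, ?_⟩
    · exact mem_biUnion.2 ⟨_, mem_range.2 hz.2, mem_powersetCard.2 ⟨subset_univ _, rfl⟩⟩
    · funext i
      cases hxi : x i <;> cases hzi : z i <;> simp [flipOn, hxi, hzi]
  calc #{z | hammingDist x z < d} ≤ #((range d).biUnion fun k => powersetCard k univ) :=
        (card_le_card hcover).trans card_image_le
    _ ≤ ∑ k ∈ range d, #(powersetCard k (univ : Finset (Fin n))) := card_biUnion_le
    _ = ∑ k ∈ range d, n.choose k := by simp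

section Greedy

variable {ι : Type*} [Fintype ι] {β : ι → Type*} [∀ i, DecidableEq (β i)]

theorem exists_separated_subset {d B : ℕ} (hd : 0 < d) (S : Finset (∀ i, β i))
    (hB : ∀ x ∈ S, #{z ∈ S | hammingDist x z < d} ≤ B) :
    ∃ C ⊆ S, (∀ x ∈ C, ∀ y ∈ C, x ≠ y → d ≤ hammingDist x y) ∧ #S ≤ #C * B := by
  induction S using Finset.strongInduction with
  | _ S ih =>
    obtain rfl | ⟨x, hx⟩ := S.eq_empty_or_nonempty
    · exact ⟨∅, by simp⟩
    set far := {z ∈ S | ¬ hammingDist x z < d}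
    have hx_far : x ∉ far := by simp [far, hd.ne']
    have hfar_ball : ∀ z ∈ far, #{y ∈ far | hammingDist z y < d} ≤ B := fun z hz =>
      (card_le_card (filter_subset_filter _ (filter_subset _ S))).trans
        (hB z (mem_of_mem_filter z hz))
    obtain ⟨C, hCfar, hCsep, hCcard⟩ :=
      ih far (ssubset_of_subset_of_ne (filter_subset _ S) (fun h => hx_far (h ▸ hx))) hfar_ball
    have hxC : x ∉ C := fun h => hx_far (hCfar h)
    refine ⟨insert x C, insert_subset hx (hCfar.trans (filter_subset _ S)), ?_, ?_⟩
    · have hfar : ∀ z ∈ C, d ≤ hammingDist x z := fun z hz => by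
        simpa [far] using (mem_filter.1 (hCfar hz)).2
      simp only [mem_insert]
      rintro y (rfl | hy) z (rfl | hz) hyz
      · exact absurd rfl hyz
      · exact hfar z hz
      · exact hammingDist_comm z y ▸ hfar y hy
      · exact hCsep y hy z hz hyz
    · have hsplit : #{z ∈ S | hammingDist x z < d} + #far = #S :=
        card_filter_add_card_filter_not _
      rw [card_insert_of_notMem hxC, add_mul, one_mul]
      have := hB x hx
      omega

end Greedy

theorem binEnt_eq_binEntropy_div (x : ℝ) : binEnt x = Real.binEntropy x / Real.log 2 := by
  simp only [binEnt, Real.binEntropy, Real.logb, Real.log_inv]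
  ring

theorem continuous_binEnt : Continuous binEnt := by
  simpa only [funext binEnt_eq_binEntropy_div] using Real.binEntropy_continuous.div_const _

theorem two_rpow_neg_binEnt_mul {δ : ℝ} (hδ0 : 0 < δ) (hδ1 : δ < 1) (t : ℝ) :
    (2 : ℝ) ^ (-(binEnt δ * t)) = δ ^ (δ * t) * (1 - δ) ^ (t - δ * t) := by
  rw [Real.rpow_def_of_pos two_pos, Real.rpow_def_of_pos hδ0, Real.rpow_def_of_pos (by linarith),
    ← Real.exp_add]
  congr 1
  simp only [binEnt, Real.logb]
  field_simp
  ring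

theorem rpow_mul_one_sub_rpow_le {δ : ℝ} (hδ0 : 0 < δ) (hδ : δ ≤ 1 / 2) (t : ℝ) {u v : ℝ}
    (huv : u ≤ v) : δ ^ v * (1 - δ) ^ (t - v) ≤ δ ^ u * (1 - δ) ^ (t - u) := by
  have h1δ : 0 < 1 - δ := by linarith
  have hsplit : ∀ s, δ ^ s * (1 - δ) ^ (t - s) = (1 - δ) ^ t * (δ / (1 - δ)) ^ s := fun s => by
    rw [Real.div_rpow hδ0.le h1δ.le, Real.rpow_sub h1δ]
    field_simp
  rw [hsplit, hsplit]
  exact mul_le_mul_of_nonneg_left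
    (Real.rpow_le_rpow_of_exponent_ge (by positivity) ((div_le_one h1δ).2 (by linarith)) huv)
    (by positivity)

theorem sum_range_choose_le_two_rpow_binEnt {δ : ℝ} (hδ0 : 0 < δ) (hδ : δ ≤ 1 / 2) (n : ℕ) :
    ∑ k ∈ range (⌊δ * n⌋₊ + 1), (n.choose k : ℝ) ≤ 2 ^ (binEnt δ * n) := by
  have hδ1 : δ < 1 := by linarith
  have hfloor : ⌊δ * n⌋₊ + 1 ≤ n + 1 := by
    gcongr
    exact Nat.floor_le_of_le (by nlinarith [(n.cast_nonneg : (0 : ℝ) ≤ n)])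
  have hterm : ∀ k ∈ range (⌊δ * n⌋₊ + 1),
      (2 : ℝ) ^ (-(binEnt δ * n)) ≤ δ ^ k * (1 - δ) ^ (n - k) := by
    intro k hk
    have hkn : k ≤ n := Nat.lt_succ_iff.1 (mem_range.1 (range_subset_range.2 hfloor hk))
    have hkδ : (k : ℝ) ≤ δ * n :=
      (Nat.le_floor_iff (by positivity)).1 (Nat.lt_succ_iff.1 (mem_range.1 hk))
    rw [two_rpow_neg_binEnt_mul hδ0 hδ1, ← Real.rpow_natCast, ← Real.rpow_natCast,
      Nat.cast_sub hkn]
    exact rpow_mul_one_sub_rpow_le hδ0 hδ _ hkδ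
  have hsum : (∑ k ∈ range (⌊δ * n⌋₊ + 1), (n.choose k : ℝ)) * 2 ^ (-(binEnt δ * n)) ≤ 1 :=
    calc (∑ k ∈ range (⌊δ * n⌋₊ + 1), (n.choose k : ℝ)) * 2 ^ (-(binEnt δ * n))
        ≤ ∑ k ∈ range (⌊δ * n⌋₊ + 1), δ ^ k * (1 - δ) ^ (n - k) * n.choose k := by
          rw [sum_mul]
          refine sum_le_sum fun k hk => ?_
          rw [mul_comm]
          exact mul_le_mul_of_nonneg_right (hterm k hk) (Nat.cast_nonneg _)
      _ ≤ ∑ k ∈ range (n + 1), δ ^ k * (1 - δ) ^ (n - k) * n.choose k :=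
          sum_le_sum_of_subset_of_nonneg (range_subset_range.2 hfloor) fun k _ _ => by
            have : 0 ≤ 1 - δ := by linarith
            positivity
      _ = 1 := by rw [← add_pow, add_sub_cancel, one_pow]
  rwa [← le_div_iff₀ (by positivity), one_div, ← Real.rpow_neg two_pos.le, neg_neg] at hsum

section ProductWeight

theorem sum_filter_le_sum_mul_sq_div {W : Type*} [Fintype W] {P : W → ℝ} (hP : ∀ w, 0 ≤ P w)
    (Z : W → ℝ) {t : ℝ} (ht : 0 < t) :
    ∑ w with t ≤ Z w, P w ≤ (∑ w, P w * Z w ^ 2) / t ^ 2 := by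
  rw [le_div_iff₀ (by positivity), sum_mul]
  calc ∑ w with t ≤ Z w, P w * t ^ 2 ≤ ∑ w with t ≤ Z w, P w * Z w ^ 2 :=
        sum_le_sum fun w hw => by
          have htZ := (mem_filter.1 hw).2
          gcongr
          exact hP w
    _ ≤ ∑ w, P w * Z w ^ 2 :=
        sum_le_sum_of_subset_of_nonneg (filter_subset _ _) fun w _ _ => by
          have := hP w
          positivity

variable {ι α : Type*} [Fintype ι] [DecidableEq ι] [Fintype α] {q : ι → α → ℝ}

theorem sum_prod_mul_prod (q h : ι → α → ℝ) :
    ∑ w : ι → α, (∏ i, q i (w i)) * ∏ i, h i (w i) = ∏ i, ∑ a, q i a * h i a := by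
  simp_rw [← prod_mul_distrib]
  exact (Fintype.prod_sum fun i a => q i a * h i a).symm

theorem sum_prod_mul_prod_finset (hq : ∀ i, ∑ a, q i a = 1) (s : Finset ι) (h : ι → α → ℝ) :
    ∑ w : ι → α, (∏ i, q i (w i)) * ∏ i ∈ s, h i (w i) = ∏ i ∈ s, ∑ a, q i a * h i a := by
  have hmarg : ∀ i, ∑ a, q i a * (if i ∈ s then h i a else 1) =
      if i ∈ s then ∑ a, q i a * h i a else 1 := fun i => by
    split_ifs <;> simp [hq]
  have := sum_prod_mul_prod q (fun i a => if i ∈ s then h i a else 1)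
  simpa only [prod_ite_mem, univ_inter, hmarg] using this

theorem sum_prod_mul_sq_sum (hq : ∀ i, ∑ a, q i a = 1) (Y : ι → α → ℝ)
    (hY : ∀ i, ∑ a, q i a * Y i a = 0) :
    ∑ w : ι → α, (∏ i, q i (w i)) * (∑ i, Y i (w i)) ^ 2 = ∑ i, ∑ a, q i a * Y i a ^ 2 := by
  have hpair : ∀ i j, ∑ w : ι → α, (∏ k, q k (w k)) * (Y i (w i) * Y j (w j)) =
      if i = j then ∑ a, q i a * Y i a ^ 2 else 0 := by
    intro i j
    split_ifs with hij
    · subst hij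
      simpa [← sq] using sum_prod_mul_prod_finset hq {i} fun k a => Y k a ^ 2
    · simpa [prod_pair hij, hY] using sum_prod_mul_prod_finset hq {i, j} Y
  calc ∑ w : ι → α, (∏ i, q i (w i)) * (∑ i, Y i (w i)) ^ 2
      = ∑ i, ∑ j, ∑ w : ι → α, (∏ k, q k (w k)) * (Y i (w i) * Y j (w j)) := by
        simp_rw [sq, sum_mul_sum, mul_sum]
        rw [sum_comm]
        exact sum_congr rfl fun i _ => sum_comm
    _ = ∑ i, ∑ a, q i a * Y i a ^ 2 := by simp [hpair]

theorem sum_prod_filter_le_card_mul_sq_div (hq0 : ∀ i a, 0 ≤ q i a) (hq1 : ∀ i, ∑ a, q i a = 1)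
    {X : ι → α → ℝ} {c : ℝ} (hX0 : ∀ i a, 0 ≤ X i a) (hXc : ∀ i a, X i a ≤ c) {s t : ℝ}
    (ht : 0 < t) (hmean : ∑ i, ∑ a, q i a * X i a + t ≤ s) :
    ∑ w : ι → α with s ≤ ∑ i, X i (w i), ∏ i, q i (w i) ≤ Fintype.card ι * c ^ 2 / t ^ 2 := by
  set m : ι → ℝ := fun i => ∑ a, q i a * X i a
  have hm0 : ∀ i, 0 ≤ m i := fun i => sum_nonneg fun a _ => mul_nonneg (hq0 i a) (hX0 i a)
  have hmc : ∀ i, m i ≤ c := fun i =>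
    calc m i ≤ ∑ a, q i a * c := sum_le_sum fun a _ => mul_le_mul_of_nonneg_left (hXc i a) (hq0 i a)
      _ = c := by rw [← sum_mul, hq1, one_mul]
  have hcentered : ∀ i, ∑ a, q i a * (X i a - m i) = 0 := fun i => by
    simp only [mul_sub, sum_sub_distrib, ← sum_mul, hq1, one_mul, m, sub_self]
  have hvar : ∀ i, ∑ a, q i a * (X i a - m i) ^ 2 ≤ c ^ 2 := fun i =>
    calc ∑ a, q i a * (X i a - m i) ^ 2 ≤ ∑ a, q i a * c ^ 2 :=
          sum_le_sum fun a _ => mul_le_mul_of_nonneg_left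
            (sq_le_sq' (by linarith [hX0 i a, hmc i]) (by linarith [hXc i a, hm0 i])) (hq0 i a)
      _ = c ^ 2 := by rw [← sum_mul, hq1, one_mul]
  have hevent : ∀ w ∈ (univ : Finset (ι → α)),
      s ≤ ∑ i, X i (w i) → t ≤ ∑ i, (X i (w i) - m i) := fun w _ hw => by
    rw [sum_sub_distrib]
    linarith
  calc ∑ w : ι → α with s ≤ ∑ i, X i (w i), ∏ i, q i (w i)
      ≤ ∑ w : ι → α with t ≤ ∑ i, (X i (w i) - m i), ∏ i, q i (w i) :=
        sum_le_sum_of_subset_of_nonneg (monotone_filter_right _ hevent) fun w _ _ =>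
          prod_nonneg fun i _ => hq0 i (w i)
    _ ≤ (∑ w : ι → α, (∏ i, q i (w i)) * (∑ i, (X i (w i) - m i)) ^ 2) / t ^ 2 :=
        sum_filter_le_sum_mul_sq_div (fun w => prod_nonneg fun i _ => hq0 i (w i)) _ ht
    _ = (∑ i, ∑ a, q i a * (X i a - m i) ^ 2) / t ^ 2 := by
        rw [sum_prod_mul_sq_sum hq1 (fun i a => X i a - m i) hcentered]
    _ ≤ Fintype.card ι * c ^ 2 / t ^ 2 := by
        gcongr
        simpa using sum_le_sum fun i (_ : i ∈ univ) => hvar i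

end ProductWeight

def flipEraseCost : Bool → Option Bool → ℕ
  | _, none => 1
  | b, some c => if b = c then 0 else 2

section FlipErase

variable {ι : Type*} [Fintype ι]

def flipEraseDist (x : ι → Bool) (y : ι → Option Bool) : ℕ :=
  ∑ i, flipEraseCost (x i) (y i)

def noiseWeight (w : ι → Option Bool) : ℕ :=
  ∑ i, flipEraseCost false (w i)

theorem two_mul_hammingDist_le_flipEraseDist (x x' : ι → Bool) (y : ι → Option Bool) :
    2 * hammingDist x x' ≤ flipEraseDist x y + flipEraseDist x' y := by
  have hsymbol : ∀ (b b' : Bool) (c : Option Bool),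
      2 * (if b ≠ b' then 1 else 0) ≤ flipEraseCost b c + flipEraseCost b' c := by
    decide
  simp only [hammingDist, card_filter, flipEraseDist, mul_sum, ← sum_add_distrib]
  exact sum_le_sum fun i _ => hsymbol (x i) (x' i) (y i)

theorem flipEraseDist_chOut {n : ℕ} (x : Fin n → Bool) (w : Fin n → Option Bool) :
    flipEraseDist x (chOut x w) = noiseWeight w := by
  refine sum_congr rfl fun i _ => ?_
  cases hw : w i with
  | none => simp [chOut, hw, flipEraseCost]
  | some b => cases hx : x i <;> cases b <;> simp [chOut, hw, hx, flipEraseCost]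

noncomputable def flipEraseDecoder (C : Finset (ι → Bool)) (d : ℕ)
    (x₀ : ι → Bool) (y : ι → Option Bool) : ι → Bool :=
  if h : ∃ x ∈ C, flipEraseDist x y < d then h.choose else x₀

variable {C : Finset (ι → Bool)} {d : ℕ} {x₀ : ι → Bool}

theorem flipEraseDecoder_mem (hx₀ : x₀ ∈ C) (y : ι → Option Bool) :
    flipEraseDecoder C d x₀ y ∈ C := by
  unfold flipEraseDecoder
  split_ifs with h
  exacts [h.choose_spec.1, hx₀]

theorem flipEraseDecoder_eq (hC : ∀ x ∈ C, ∀ x' ∈ C, x ≠ x' → d ≤ hammingDist x x')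
    {x : ι → Bool} (hx : x ∈ C) {y : ι → Option Bool} (hy : flipEraseDist x y < d) :
    flipEraseDecoder C d x₀ y = x := by
  have hex : ∃ x ∈ C, flipEraseDist x y < d := ⟨x, hx, hy⟩
  rw [flipEraseDecoder, dif_pos hex]
  by_contra hne
  have := hC _ hex.choose_spec.1 x hx hne
  have := two_mul_hammingDist_le_flipEraseDist hex.choose x y
  linarith [hex.choose_spec.2]

end FlipErase

noncomputable def noiseLaw {n : ℕ} (pf pe : Fin n → ℝ) (i : Fin n) (a : Option Bool) : ℝ :=
  if a = some true then pf i else if a = none then pe i else 1 - pf i - pe i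

section Channel

variable {n : ℕ} {pf pe : Fin n → ℝ}

theorem noiseProb_eq_prod (w : Fin n → Option Bool) :
    noiseProb pf pe w = ∏ i, noiseLaw pf pe i (w i) := rfl

theorem noiseLaw_nonneg (hpf0 : ∀ i, 0 ≤ pf i) (hpe0 : ∀ i, 0 ≤ pe i)
    (hpfe : ∀ i, pf i + pe i ≤ 1) (i : Fin n) (a : Option Bool) : 0 ≤ noiseLaw pf pe i a := by
  unfold noiseLaw
  split_ifs <;> linarith [hpf0 i, hpe0 i, hpfe i]

theorem sum_noiseLaw (i : Fin n) : ∑ a, noiseLaw pf pe i a = 1 := by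
  simp only [noiseLaw, Fintype.sum_option, Fintype.sum_bool, reduceCtorEq, ↓reduceIte,
    Option.some.injEq, Bool.false_eq_true]
  ring

theorem sum_noiseLaw_mul_flipEraseCost (i : Fin n) :
    ∑ a, noiseLaw pf pe i a * flipEraseCost false a = 2 * pf i + pe i := by
  simp only [noiseLaw, flipEraseCost, Fintype.sum_option, Fintype.sum_bool, reduceCtorEq,
    ↓reduceIte, Option.some.injEq, Bool.false_eq_true]
  push_cast
  ring

theorem sum_noiseProb_noiseWeight_ge_le (hpf0 : ∀ i, 0 ≤ pf i) (hpe0 : ∀ i, 0 ≤ pe i)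
    (hpfe : ∀ i, pf i + pe i ≤ 1) {d : ℕ} {t : ℝ} (ht : 0 < t)
    (hmean : ∑ i, (2 * pf i + pe i) + t ≤ d) :
    ∑ w : Fin n → Option Bool with d ≤ noiseWeight w, noiseProb pf pe w ≤ 4 * n / t ^ 2 := by
  have hcost : ∀ a, flipEraseCost false a ≤ 2 := by decide
  have hevent : ∀ w : Fin n → Option Bool,
      d ≤ noiseWeight w ↔ (d : ℝ) ≤ ∑ i, (flipEraseCost false (w i) : ℝ) := fun w => by
    rw [noiseWeight, ← Nat.cast_sum, Nat.cast_le]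
  have htail := sum_prod_filter_le_card_mul_sq_div (noiseLaw_nonneg hpf0 hpe0 hpfe) sum_noiseLaw
    (X := fun _ a => (flipEraseCost false a : ℝ)) (c := 2) (fun _ _ => Nat.cast_nonneg _)
    (fun _ a => by exact_mod_cast hcost a) ht
    (by simpa only [sum_noiseLaw_mul_flipEraseCost] using hmean)
  calc ∑ w : Fin n → Option Bool with d ≤ noiseWeight w, noiseProb pf pe w
      = ∑ w : Fin n → Option Bool with (d : ℝ) ≤ ∑ i, (flipEraseCost false (w i) : ℝ),
          ∏ i, noiseLaw pf pe i (w i) := by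
        simp only [hevent, noiseProb_eq_prod]
    _ ≤ Fintype.card (Fin n) * 2 ^ 2 / t ^ 2 := htail
    _ = 4 * n / t ^ 2 := by rw [Fintype.card_fin]; ring

theorem errProb_flipEraseDecoder_le (hpf0 : ∀ i, 0 ≤ pf i) (hpe0 : ∀ i, 0 ≤ pe i)
    (hpfe : ∀ i, pf i + pe i ≤ 1) {C : Finset (Fin n → Bool)} {d : ℕ}
    (hC : ∀ x ∈ C, ∀ x' ∈ C, x ≠ x' → d ≤ hammingDist x x') (x₀ : Fin n → Bool)
    {x : Fin n → Bool} (hx : x ∈ C) :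
    errProb pf pe (flipEraseDecoder C d x₀) x ≤
      ∑ w : Fin n → Option Bool with d ≤ noiseWeight w, noiseProb pf pe w := by
  refine sum_le_sum_of_subset_of_nonneg (monotone_filter_right _ fun w _ hw => ?_) fun w _ _ =>
    prod_nonneg fun i _ => noiseLaw_nonneg hpf0 hpe0 hpfe i (w i)
  by_contra hlt
  exact hw (flipEraseDecoder_eq hC hx (by rw [flipEraseDist_chOut]; omega))

theorem sum_two_mul_add_div_mem_Icc (hpf0 : ∀ i, 0 ≤ pf i) (hpe0 : ∀ i, 0 ≤ pe i)
    (hpfe : ∀ i, pf i + pe i ≤ 1) : (∑ i, (2 * pf i + pe i)) / n ∈ Set.Icc 0 2 := by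
  refine ⟨div_nonneg (sum_nonneg fun i _ => by linarith [hpf0 i, hpe0 i]) n.cast_nonneg,
    div_le_of_le_mul₀ n.cast_nonneg zero_le_two ?_⟩
  simpa [mul_comm] using sum_le_sum fun i (_ : i ∈ univ) =>
    (show 2 * pf i + pe i ≤ 2 by linarith [hpfe i, hpe0 i])

theorem exists_code_errProb_le (hpf0 : ∀ i, 0 ≤ pf i) (hpe0 : ∀ i, 0 ≤ pe i)
    (hpfe : ∀ i, pf i + pe i ≤ 1) {D : Finset (Fin n → Bool)} (hD : D.Nonempty) {d : ℕ}
    (hd : 0 < d) {t : ℝ} (ht : 0 < t) (hmean : ∑ i, (2 * pf i + pe i) + t ≤ d) :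
    ∃ C ⊆ D, #D ≤ #C * ∑ k ∈ range d, n.choose k ∧
      ∃ g : (Fin n → Option Bool) → (Fin n → Bool),
        (∀ y, g y ∈ C) ∧ ∀ x ∈ C, errProb pf pe g x ≤ 4 * n / t ^ 2 := by
  obtain ⟨C, hCD, hCsep, hCcard⟩ := exists_separated_subset hd D fun x _ =>
    (card_le_card (filter_subset_filter _ (subset_univ D))).trans (card_hammingDist_lt_le x d)
  obtain ⟨x₀, hx₀⟩ : C.Nonempty := by
    rw [← card_pos]
    exact Nat.pos_of_mul_pos_right (hD.card_pos.trans_le hCcard)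
  refine ⟨C, hCD, hCcard, flipEraseDecoder C d x₀, flipEraseDecoder_mem hx₀, fun x hx => ?_⟩
  exact (errProb_flipEraseDecoder_le hpf0 hpe0 hpfe hCsep x₀ hx).trans
    (sum_noiseProb_noiseWeight_ge_le hpf0 hpe0 hpfe ht hmean)

theorem exists_code_card_ge_errProb_le (hpf0 : ∀ i, 0 ≤ pf i) (hpe0 : ∀ i, 0 ≤ pe i)
    (hpfe : ∀ i, pf i + pe i ≤ 1) {α δ : ℝ} (hδ0 : 0 < δ) (hδ : δ ≤ 1 / 2)
    {D : Finset (Fin n → Bool)} (hD : (2 : ℝ) ^ (α * n) ≤ #D) {t : ℝ} (ht : 0 < t)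
    (hmean : ∑ i, (2 * pf i + pe i) + t ≤ δ * n) :
    ∃ C ⊆ D, (2 : ℝ) ^ ((α - binEnt δ) * n) ≤ #C ∧
      ∃ g : (Fin n → Option Bool) → (Fin n → Bool),
        (∀ y, g y ∈ C) ∧ ∀ x ∈ C, errProb pf pe g x ≤ 4 * n / t ^ 2 := by
  have hDne : D.Nonempty := card_pos.1 (by exact_mod_cast (by positivity : (0 : ℝ) < _).trans_le hD)
  have hmean' : ∑ i, (2 * pf i + pe i) + t ≤ ((⌊δ * n⌋₊ + 1 : ℕ) : ℝ) := by
    push_cast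
    linarith [Nat.lt_floor_add_one (δ * n)]
  obtain ⟨C, hCD, hCcard, hg⟩ :=
    exists_code_errProb_le hpf0 hpe0 hpfe hDne (Nat.succ_pos _) ht hmean'
  refine ⟨C, hCD, ?_, hg⟩
  rw [sub_mul, Real.rpow_sub two_pos, div_le_iff₀ (by positivity)]
  calc (2 : ℝ) ^ (α * n) ≤ #D := hD
    _ ≤ #C * ∑ k ∈ range (⌊δ * n⌋₊ + 1), (n.choose k : ℝ) := by exact_mod_cast hCcard
    _ ≤ #C * 2 ^ (binEnt δ * n) := by
        gcongr
        exact sum_range_choose_le_two_rpow_binEnt hδ0 hδ n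

end Channel

theorem exists_gt_lt_one_half_binEnt_lt {p c : ℝ} (hp : p < 1 / 2) (hc : binEnt p < c) :
    ∃ δ, p < δ ∧ δ < 1 / 2 ∧ binEnt δ < c := by
  have hnhds : ∀ᶠ δ in 𝓝 p, δ < 1 / 2 ∧ binEnt δ < c :=
    ((isOpen_lt continuous_id continuous_const).inter
      (isOpen_lt continuous_binEnt continuous_const)).mem_nhds ⟨hp, hc⟩
  have hright : ∀ᶠ δ in 𝓝[>] p, p < δ := self_mem_nhdsWithin
  exact (hright.and (nhdsWithin_le_nhds hnhds)).exists

theorem achievability_binary_channels_with_dictionaries_general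
    (pf pe : (n : ℕ) → Fin n → ℝ)
    (hpf0 : ∀ n i, 0 ≤ pf n i) (hpe0 : ∀ n i, 0 ≤ pe n i)
    (hpfe : ∀ n i, pf n i + pe n i ≤ 1)
    (μf μe : ℕ → ℝ)
    (hμf : ∀ n, μf n = ∑ i, pf n i) (hμe : ∀ n, μe n = ∑ i, pe n i)
    (p : ℝ)
    (hp : p = Filter.limsup (fun n : ℕ => (2 * μf n + μe n) / n) Filter.atTop)
    (hphalf : p < 1 / 2)
    (α : ℝ)
    (D : (n : ℕ) → Finset (Fin n → Bool))
    (hD : ∀ n : ℕ, (2 : ℝ) ^ (α * (n : ℝ)) ≤ ((D n).card : ℝ))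
    (R : ℝ) (hR : R < α - binEnt p)
    (ε : ℝ) (hε : 0 < ε) :
    ∀ᶠ n in Filter.atTop,
      ∃ C : Finset (Fin n → Bool), C ⊆ D n ∧
        (2 : ℝ) ^ ((n : ℝ) * R) ≤ C.card ∧
        ∃ g : (Fin n → Option Bool) → (Fin n → Bool),
          (∀ y, g y ∈ C) ∧ ∀ x ∈ C, errProb (pf n) (pe n) g x < ε := by
  have hsum : ∀ n, 2 * μf n + μe n = ∑ i, (2 * pf n i + pe n i) := fun n => by
    rw [hμf, hμe, mul_sum, sum_add_distrib]
  have hratio : ∀ n : ℕ, (2 * μf n + μe n) / n ∈ Set.Icc 0 2 := fun n =>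
    hsum n ▸ sum_two_mul_add_div_mem_Icc (hpf0 n) (hpe0 n) (hpfe n)
  have hbdd : IsBoundedUnder (· ≤ ·) atTop fun n : ℕ => (2 * μf n + μe n) / n :=
    isBoundedUnder_of ⟨2, fun n => (hratio n).2⟩
  have hp0 : 0 ≤ p := hp ▸ le_limsup_of_frequently_le (.of_forall fun n => (hratio n).1) hbdd
  obtain ⟨δ, hpδ, hδhalf, hδR⟩ := exists_gt_lt_one_half_binEnt_lt (c := α - R) hphalf (by linarith)
  obtain ⟨p', hpp', hp'δ⟩ := exists_between hpδ
  filter_upwards [eventually_lt_of_limsup_lt (hp ▸ hpp') hbdd,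
    tendsto_natCast_atTop_atTop.eventually_gt_atTop (4 / (ε * (δ - p') ^ 2)),
    eventually_gt_atTop 0] with n hn_mean hn_large hn_pos
  have hn : (0 : ℝ) < n := Nat.cast_pos.2 hn_pos
  have hmean : ∑ i, (2 * pf n i + pe n i) + (δ - p') * n ≤ δ * n := by
    rw [← hsum]
    linarith [(div_lt_iff₀ hn).1 hn_mean]
  obtain ⟨C, hCD, hCcard, g, hg, herr⟩ := exists_code_card_ge_errProb_le (hpf0 n) (hpe0 n)
    (hpfe n) (hp0.trans_lt hpδ) hδhalf.le (hD n) (mul_pos (by linarith) hn) hmean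
  refine ⟨C, hCD, le_trans ?_ hCcard, g, hg, fun x hx => (herr x hx).trans_lt ?_⟩
  · exact Real.rpow_le_rpow_of_exponent_le one_le_two (by nlinarith)
  · rw [div_lt_iff₀ (by positivity)] at hn_large ⊢
    nlinarith

theorem achievability_binary_channels_with_dictionaries
    (pf pe : (n : ℕ) → Fin n → ℝ)
    (hpf0 : ∀ n i, 0 ≤ pf n i) (hpe0 : ∀ n i, 0 ≤ pe n i)
    (hpfe : ∀ n i, pf n i + pe n i ≤ 1)
    (μf μe : ℕ → ℝ)
    (hμf : ∀ n, μf n = ∑ i, pf n i) (hμe : ∀ n, μe n = ∑ i, pe n i)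
    (hmin : Filter.Tendsto (fun n => min (μf n) (μe n)) Filter.atTop Filter.atTop)
    (p : ℝ)
    (hp : p = Filter.limsup (fun n : ℕ => (2 * μf n + μe n) / n) Filter.atTop)
    (hphalf : p < 1 / 2)
    (α : ℝ) (hα1 : binEnt p < α) (hα2 : α ≤ 1)
    (D : (n : ℕ) → Finset (Fin n → Bool))
    (hD : ∀ n : ℕ, (2 : ℝ) ^ (α * (n : ℝ)) ≤ ((D n).card : ℝ))
    (R : ℝ) (hR0 : 0 < R) (hR : R < α - binEnt p)
    (ε : ℝ) (hε : 0 < ε) :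
    ∀ᶠ n in Filter.atTop,
      ∃ C : Finset (Fin n → Bool), C ⊆ D n ∧
        (2 : ℝ) ^ ((n : ℝ) * R) ≤ C.card ∧
        ∃ g : (Fin n → Option Bool) → (Fin n → Bool),
          (∀ y, g y ∈ C) ∧ ∀ x ∈ C, errProb (pf n) (pe n) g x < ε :=
  achievability_binary_channels_with_dictionaries_general pf pe hpf0 hpe0 hpfe μf μe hμf hμe p hp
    hphalf α D hD R hR ε hε
end

section
/- Let X and Y be finite alphabets with N := #X ≥ 2, let p_{Y|X}(y|x) be a channel transition probability, let p_X be a probability distribution on X with H(X) > 0, and define p_{XY}(x,y) = p_{Y|X}(y|x)p_X(x), with all entropies taken with logarithms to base N. Let 0 < α ≤ H(X). Then for every ε > 0 and all sufficiently large n there exists a deterministic set B_n ⊆ X^n with #B_n ≥ N^{n(H(X)−2ε)} satisfying: for every subset D_n ⊆ B_n of cardinality at least N^{n(α−2ε)} and every rate R with 0 < R < α − H(Y|X) − H(X|Y) − 7ε, there exist a code C_n ⊆ D_n with #C_n ≥ N^{nR} and a decoder g_n : Y^n → C_n such that max_{x ∈ C_n} P(g_n(Γ_x) ≠ x) ≤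 ε. -/
/-!
Feinstein's maximal-code argument on top of the asymptotic equipartition property, run with
`δ = min ε (1/2)`. By Chebyshev's inequality, for large `n` the i.i.d. input `x` has probability `N ^ (-n (H(X) ± δ))` outside a set
of mass `1/4`, and on average the channel puts all but mass `δ/8` on outputs that are typical both
given `x` and for the output law. By Markov's inequality the typical inputs whose typical outputs
carry mass `1 - δ/2` form a set `B` of mass at least `1/2`, so `#B ≥ N ^ (n (H(X) - 2δ))`.

For `D ⊆ B`, an input has at most `N ^ (n (H(Y|X) + δ))` typical outputs, and since
`H(X|Y) = H(X) + H(Y|X) - H(Y)` an output is typical for at most `N ^ (n (H(X|Y) + 3δ))` inputs of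
`D`. Codewords whose still unused typical outputs carry mass `1 - δ` can therefore be added greedily
until there are `#D δ / 2 · N ^ (-n (H(Y|X) + H(X|Y) + 4δ)) > N ^ (n R)` of them.
-/

open scoped Classical BigOperators

open Finset Real Filter

section FiniteSums

variable {ι α : Type*}

theorem sum_biUnion_le_sum_sum [DecidableEq α] {s : Finset ι} {t : ι → Finset α} {f : α → ℝ}
    (hf : ∀ a, 0 ≤ f a) : ∑ a ∈ s.biUnion t, f a ≤ ∑ i ∈ s, ∑ a ∈ t i, f a := by
  induction s using Finset.induction_on with
  | empty => simp
  | insert i s hi ih =>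
    rw [biUnion_insert, sum_insert hi]
    have hunion := sum_union_inter (s₁ := t i) (s₂ := s.biUnion t) (f := f)
    have hinter : 0 ≤ ∑ a ∈ t i ∩ s.biUnion t, f a := sum_nonneg fun a _ => hf a
    linarith

theorem sum_filter_not_and_le (s : Finset ι) {f : ι → ℝ} (hf : ∀ i, 0 ≤ f i) (p q : ι → Prop) :
    ∑ i ∈ s with ¬(p i ∧ q i), f i ≤ ∑ i ∈ s with ¬p i, f i + ∑ i ∈ s with ¬q i, f i := by
  simp only [sum_filter, ← sum_add_distrib]
  refine sum_le_sum fun i _ => ?_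
  by_cases hp : p i <;> by_cases hq : q i <;> simp [hp, hq, hf i]

theorem sum_filter_lt_le_div [Fintype ι] {P e : ι → ℝ} (hP : ∀ i, 0 ≤ P i) (he : ∀ i, 0 ≤ e i)
    {c : ℝ} (hc : 0 < c) : ∑ i with c < e i, P i ≤ (∑ i, P i * e i) / c := by
  rw [le_div_iff₀ hc, sum_mul]
  calc ∑ i with c < e i, P i * c ≤ ∑ i with c < e i, P i * e i :=
        sum_le_sum fun i hi => mul_le_mul_of_nonneg_left (mem_filter.1 hi).2.le (hP i)
    _ ≤ ∑ i, P i * e i :=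
        sum_le_sum_of_subset_of_nonneg (filter_subset _ _) fun i _ _ => mul_nonneg (hP i) (he i)

theorem card_le_rpow_sub {T : Finset ι} {f : ι → ℝ} {N a b : ℝ} (hN : 0 < N)
    (hf : ∀ i ∈ T, N ^ (-a) ≤ f i) (hsum : ∑ i ∈ T, f i ≤ N ^ (-b)) : (#T : ℝ) ≤ N ^ (a - b) := by
  have hT : (#T : ℝ) * N ^ (-a) ≤ N ^ (-b) := by
    rw [← nsmul_eq_mul]; exact (card_nsmul_le_sum T f _ hf).trans hsum
  rwa [← le_div_iff₀ (rpow_pos_of_pos hN _), ← rpow_sub hN, neg_sub_neg] at hT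

end FiniteSums

section ProductSums

variable {Ω : Type*} [Fintype Ω] {n : ℕ} {p : Ω → ℝ}

theorem sum_prod_mul_prod_s9 (p : Ω → ℝ) (q : Fin n → Ω → ℝ) :
    ∑ ω : Fin n → Ω, (∏ i, p (ω i)) * ∏ i, q i (ω i) = ∏ i, ∑ z, p z * q i z := by
  simp_rw [← prod_mul_distrib]
  exact (Fintype.prod_sum fun i z => p z * q i z).symm

theorem sum_prod_eq_one {q : Fin n → Ω → ℝ} (hq : ∀ i, ∑ z, q i z = 1) :
    ∑ ω : Fin n → Ω, ∏ i, q i (ω i) = 1 := by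
  rw [← Fintype.prod_sum]
  simp [hq]

theorem sum_prod_mul_mul_eq_ite (hp : ∑ z, p z = 1) {g : Ω → ℝ} (hg : ∑ z, p z * g z = 0)
    (i j : Fin n) :
    ∑ ω : Fin n → Ω, (∏ k, p (ω k)) * (g (ω i) * g (ω j)) =
      if i = j then ∑ z, p z * g z ^ 2 else 0 := by
  have hq : ∀ ω : Fin n → Ω, g (ω i) * g (ω j) =
      ∏ k, (if k = i then g (ω k) else 1) * (if k = j then g (ω k) else 1) := by
    intro ω
    rw [prod_mul_distrib, prod_ite_eq' univ i, prod_ite_eq' univ j]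
    simp
  simp_rw [hq]
  rw [sum_prod_mul_prod_s9 p fun k z => (if k = i then g z else 1) * (if k = j then g z else 1)]
  split_ifs with hij
  · subst hij
    rw [prod_eq_single i (fun k _ hk => by simp [hk, hp]) (by simp)]
    simp [sq]
  · exact prod_eq_zero (mem_univ i) (by simp [hij, hg])

theorem sum_prod_mul_sum_sq (hp : ∑ z, p z = 1) {g : Ω → ℝ} (hg : ∑ z, p z * g z = 0) :
    ∑ ω : Fin n → Ω, (∏ k, p (ω k)) * (∑ i, g (ω i)) ^ 2 = n * ∑ z, p z * g z ^ 2 := by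
  simp_rw [sq (∑ i, _), sum_mul_sum, mul_sum]
  rw [sum_comm]
  simp_rw [sum_comm (γ := Fin n → Ω), sum_prod_mul_mul_eq_ite hp hg]
  simp [mul_sum]

theorem sum_prod_le_variance_div_sq (hp0 : ∀ z, 0 ≤ p z) (hp : ∑ z, p z = 1) (f : Ω → ℝ)
    (hn : 0 < n) {δ : ℝ} (hδ : 0 < δ) :
    ∑ ω : Fin n → Ω with n * δ ≤ |∑ i, f (ω i) - n * ∑ z, p z * f z|, ∏ i, p (ω i) ≤
      (∑ z, p z * (f z - ∑ w, p w * f w) ^ 2) / (n * δ ^ 2) := by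
  set μ := ∑ z, p z * f z
  have hg : ∑ z, p z * (f z - μ) = 0 := by simp [mul_sub, sum_sub_distrib, ← sum_mul, hp, μ]
  have hdev : ∀ ω : Fin n → Ω, ∑ i, f (ω i) - n * μ = ∑ i, (f (ω i) - μ) := by
    simp [sum_sub_distrib]
  have hP : ∀ ω : Fin n → Ω, 0 ≤ ∏ i, p (ω i) := fun ω => prod_nonneg fun i _ => hp0 _
  have key : (∑ ω : Fin n → Ω with n * δ ≤ |∑ i, f (ω i) - n * μ|, ∏ i, p (ω i)) * (n * δ) ^ 2 ≤
      n * ∑ z, p z * (f z - μ) ^ 2 := by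
    rw [← sum_prod_mul_sum_sq hp hg, sum_mul]
    refine (sum_le_sum fun ω hω => ?_).trans
      (sum_le_sum_of_subset_of_nonneg (filter_subset _ _) fun ω _ _ => ?_)
    · rw [mem_filter, hdev] at hω
      refine mul_le_mul_of_nonneg_left ?_ (hP ω)
      simpa [sq_abs] using pow_le_pow_left₀ (by positivity) hω.2 2
    · exact mul_nonneg (hP ω) (sq_nonneg _)
  have hn' : (0 : ℝ) < n := by exact_mod_cast hn
  rw [le_div_iff₀ (by positivity)]
  nlinarith

end ProductSums

section Typicality

def IsTypicalWeight (N : ℝ) (n : ℕ) (H δ w : ℝ) : Prop :=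
  N ^ (-(n * (H + δ))) ≤ w ∧ w ≤ N ^ (-(n * (H - δ)))

variable {n : ℕ} {N H δ : ℝ}

theorem isTypicalWeight_prod_of_abs_lt (hN : 1 < N) {q : Fin n → ℝ} (hq : ∀ i, 0 < q i)
    (h : |∑ i, -logb N (q i) - n * H| < n * δ) : IsTypicalWeight N n H δ (∏ i, q i) := by
  rw [← rpow_logb (by linarith) hN.ne' (prod_pos fun i _ => hq i),
    logb_prod _ _ fun i _ => (hq i).ne']
  rw [sum_neg_distrib] at h
  obtain ⟨h₁, h₂⟩ := abs_lt.1 h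
  constructor <;> apply rpow_le_rpow_of_exponent_le hN.le <;> linarith

/-- The asymptotic equipartition property, quantified by Chebyshev's inequality. -/
theorem sum_prod_not_isTypicalWeight_le {Ω : Type*} [Fintype Ω] {p q : Ω → ℝ}
    (hp0 : ∀ z, 0 ≤ p z) (hp : ∑ z, p z = 1) (hq : ∀ z, p z ≠ 0 → 0 < q z) (hN : 1 < N)
    (hH : ∑ z, p z * -logb N (q z) = H) (hn : 0 < n) (hδ : 0 < δ) :
    ∑ ω : Fin n → Ω with ¬IsTypicalWeight N n H δ (∏ i, q (ω i)), ∏ i, p (ω i) ≤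
      (∑ z, p z * (-logb N (q z) - H) ^ 2) / (n * δ ^ 2) := by
  have hcheb := sum_prod_le_variance_div_sq hp0 hp (fun z => -logb N (q z)) hn hδ
  simp only [hH] at hcheb
  refine le_trans ?_ hcheb
  rw [← sum_filter_ne_zero]
  refine sum_le_sum_of_subset_of_nonneg (fun ω hω => ?_) fun ω _ _ => prod_nonneg fun i _ => hp0 _
  simp only [mem_filter, mem_univ, true_and] at hω ⊢
  by_contra hlt
  exact hω.1 (isTypicalWeight_prod_of_abs_lt hN
    (fun i => hq _ fun h0 => hω.2 (prod_eq_zero (mem_univ i) h0)) (not_le.1 hlt))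

end Typicality

section Feinstein

variable {α β : Type*} [DecidableEq β] {W : α → β → ℝ}

theorem exists_decoder_of_pairwiseDisjoint [DecidableEq α] [Fintype β] (hW0 : ∀ x y, 0 ≤ W x y)
    (hW1 : ∀ x, ∑ y, W x y = 1) {C : Finset α} (hC : C.Nonempty) {Dec : α → Finset β}
    (hdisj : (C : Set α).PairwiseDisjoint Dec) {ε : ℝ}
    (hDec : ∀ x ∈ C, 1 - ε ≤ ∑ y ∈ Dec x, W x y) :
    ∃ g : β → α, (∀ y, g y ∈ C) ∧ ∀ x ∈ C, ∑ y with g y ≠ x, W x y ≤ ε := by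
  let g : β → α := fun y => if h : ∃ x ∈ C, y ∈ Dec x then h.choose else hC.choose
  have hgC : ∀ y, g y ∈ C := by
    intro y
    simp only [g]
    split_ifs with h
    · exact h.choose_spec.1
    · exact hC.choose_spec
  have hgDec : ∀ x ∈ C, ∀ y ∈ Dec x, g y = x := by
    intro x hx y hy
    have h : ∃ x ∈ C, y ∈ Dec x := ⟨x, hx, hy⟩
    simp only [g, dif_pos h]
    by_contra hne
    exact disjoint_left.1 (hdisj h.choose_spec.1 hx hne) h.choose_spec.2 hy
  refine ⟨g, hgC, fun x hx => ?_⟩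
  have hsub : ({y | g y ≠ x} : Finset β) ⊆ (Dec x)ᶜ := fun y hy =>
    mem_compl.2 fun hyD => (mem_filter.1 hy).2 (hgDec x hx y hyD)
  have hcompl := sum_compl_add_sum (Dec x) (W x)
  calc ∑ y with g y ≠ x, W x y ≤ ∑ y ∈ (Dec x)ᶜ, W x y :=
        sum_le_sum_of_subset_of_nonneg hsub fun y _ _ => hW0 x y
    _ ≤ ε := by linarith [hW1 x, hDec x hx]

variable {D : Finset α} {S : α → Finset β} {δ ε K : ℝ}

/-- If there were no such `x`, every `x ∈ D` would put mass `ε - δ` on the outputs already used,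
and double counting bounds that total by `#C * K`. -/
theorem exists_mem_one_sub_le_sum_sdiff_biUnion (hW0 : ∀ x y, 0 ≤ W x y)
    (hS : ∀ x ∈ D, 1 - δ ≤ ∑ y ∈ S x, W x y)
    (hK : ∀ x ∈ D, ∑ y ∈ S x, ∑ x' ∈ D with y ∈ S x', W x' y ≤ K) {C : Finset α} (hCD : C ⊆ D)
    (hC : #C * K < #D * (ε - δ)) : ∃ x ∈ D, 1 - ε ≤ ∑ y ∈ S x \ C.biUnion S, W x y := by
  by_contra! h
  set U := C.biUnion S
  have hoverlap : ∀ x ∈ D, ε - δ ≤ ∑ y ∈ S x ∩ U, W x y := by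
    intro x hx
    have := sum_inter_add_sum_sdiff (S x) U (W x)
    linarith [hS x hx, h x hx]
  have : #D * (ε - δ) ≤ #C * K := calc
    #D * (ε - δ) ≤ ∑ x ∈ D, ∑ y ∈ S x ∩ U, W x y := by
        rw [← nsmul_eq_mul]; exact card_nsmul_le_sum _ _ _ hoverlap
    _ = ∑ y ∈ U, ∑ x ∈ D with y ∈ S x, W x y :=
        sum_comm' fun x y => by simp only [mem_inter, mem_filter]; tauto
    _ ≤ ∑ c ∈ C, ∑ y ∈ S c, ∑ x ∈ D with y ∈ S x, W x y :=
        sum_biUnion_le_sum_sum fun y => sum_nonneg fun x _ => hW0 x y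
    _ ≤ #C * K := by
        rw [← nsmul_eq_mul]; exact sum_le_card_nsmul _ _ _ fun c hc => hK c (hCD hc)
  linarith

theorem exists_pairwiseDisjoint_decodingSets (hW0 : ∀ x y, 0 ≤ W x y) (hε : ε < 1)
    (hS : ∀ x ∈ D, 1 - δ ≤ ∑ y ∈ S x, W x y) (hK0 : 0 ≤ K)
    (hK : ∀ x ∈ D, ∑ y ∈ S x, ∑ x' ∈ D with y ∈ S x', W x' y ≤ K) :
    ∀ m : ℕ, m * K < #D * (ε - δ) → ∃ C ⊆ D, #C = m ∧ ∃ Dec : α → Finset β,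
      (C : Set α).PairwiseDisjoint Dec ∧ (∀ x ∈ C, Dec x ⊆ S x) ∧
        ∀ x ∈ C, 1 - ε ≤ ∑ y ∈ Dec x, W x y
  | 0, _ => ⟨∅, empty_subset _, rfl, fun _ => ∅, by simp, by simp, by simp⟩
  | m + 1, hm => by
    push_cast at hm
    obtain ⟨C, hCD, hCm, Dec, hdisj, hDecS, hDec⟩ :=
      exists_pairwiseDisjoint_decodingSets hW0 hε hS hK0 hK m (by nlinarith)
    obtain ⟨x₀, hx₀D, hx₀⟩ :=
      exists_mem_one_sub_le_sum_sdiff_biUnion (ε := ε) hW0 hS hK hCD (by rw [hCm]; linarith)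
    have hx₀C : x₀ ∉ C := fun hx => by
      rw [sdiff_eq_empty_iff_subset.2 (subset_biUnion_of_mem S hx), sum_empty] at hx₀
      linarith
    have hupd : ∀ x ∈ C, Function.update Dec x₀ (S x₀ \ C.biUnion S) x = Dec x := fun x hx =>
      Function.update_of_ne (ne_of_mem_of_not_mem hx hx₀C) _ _
    refine ⟨insert x₀ C, insert_subset hx₀D hCD, by rw [card_insert_of_notMem hx₀C, hCm],
      Function.update Dec x₀ (S x₀ \ C.biUnion S), ?_, ?_, ?_⟩
    · rw [coe_insert, Set.pairwiseDisjoint_insert_of_notMem hx₀C]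
      refine ⟨hdisj.mono_on fun x hx => (hupd x hx).le, fun x hx => ?_⟩
      rw [Function.update_self, hupd x hx]
      exact disjoint_sdiff_self_left.mono_right ((hDecS x hx).trans (subset_biUnion_of_mem S hx))
    · simp only [forall_mem_insert, Function.update_self, sdiff_subset, true_and]
      exact fun x hx => hupd x hx ▸ hDecS x hx
    · simp only [forall_mem_insert, Function.update_self]
      exact ⟨hx₀, fun x hx => hupd x hx ▸ hDec x hx⟩

theorem exists_code_and_decoder [DecidableEq α] [Fintype β] (hW0 : ∀ x y, 0 ≤ W x y)
    (hW1 : ∀ x, ∑ y, W x y = 1) (hε : ε < 1) (hS : ∀ x ∈ D, 1 - δ ≤ ∑ y ∈ S x, W x y) (hK0 : 0 ≤ K)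
    (hK : ∀ x ∈ D, ∑ y ∈ S x, ∑ x' ∈ D with y ∈ S x', W x' y ≤ K) {m : ℕ} (hm0 : 0 < m)
    (hm : m * K < #D * (ε - δ)) :
    ∃ C ⊆ D, #C = m ∧ ∃ g : β → α, (∀ y, g y ∈ C) ∧ ∀ x ∈ C, ∑ y with g y ≠ x, W x y ≤ ε := by
  obtain ⟨C, hCD, hCm, Dec, hdisj, -, hDec⟩ :=
    exists_pairwiseDisjoint_decodingSets hW0 hε hS hK0 hK m hm
  exact ⟨C, hCD, hCm,
    exists_decoder_of_pairwiseDisjoint hW0 hW1 (card_pos.1 (hCm ▸ hm0)) hdisj hDec⟩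

end Feinstein

theorem eventually_le_rpow_natCast_mul {N : ℝ} (hN : 1 < N) (c : ℝ) {δ : ℝ} (hδ : 0 < δ) :
    ∀ᶠ n : ℕ in atTop, c ≤ N ^ (n * δ) :=
  ((tendsto_rpow_atTop_of_base_gt_one N hN).comp
    (tendsto_natCast_atTop_atTop.atTop_mul_const hδ)).eventually_ge_atTop c

theorem eventually_div_natCast_mul_le (c : ℝ) {d r : ℝ} (hd : 0 < d) (hr : 0 < r) :
    ∀ᶠ n : ℕ in atTop, c / (n * d) ≤ r :=
  (tendsto_const_nhds.div_atTop (tendsto_natCast_atTop_atTop.atTop_mul_const hd)).eventually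
    (ge_mem_nhds hr)

theorem natCeil_rpow_mul_rpow_lt {N t k s d c ε : ℝ} (hN : 1 < N) (ht : 0 ≤ t) (hε : 0 < ε)
    (hs : 4 / ε ≤ N ^ s) (hd : t + k + s ≤ d) (hc : N ^ d ≤ c) :
    ⌈N ^ t⌉₊ * N ^ k < c * (ε / 2) := by
  have hN0 : 0 < N := by linarith
  have hceil : (⌈N ^ t⌉₊ : ℝ) < 2 * N ^ t := by
    linarith [Nat.ceil_lt_add_one (rpow_nonneg hN0.le t), one_le_rpow hN.le ht]
  have hs' : 2 ≤ ε / 2 * N ^ s := by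
    rw [div_le_iff₀' hε] at hs; linarith
  calc ⌈N ^ t⌉₊ * N ^ k < 2 * N ^ t * N ^ k := by gcongr
    _ ≤ ε / 2 * N ^ s * (N ^ t * N ^ k) := by
        rw [mul_assoc]; gcongr
    _ = N ^ (t + k + s) * (ε / 2) := by rw [rpow_add hN0, rpow_add hN0]; ring
    _ ≤ c * (ε / 2) := by gcongr; exact (rpow_le_rpow_of_exponent_le hN.le hd).trans hc

section Channel

variable {X Y : Type*} [Fintype X] {pYX : X → Y → ℝ} {pX : X → ℝ} {pXY : X → Y → ℝ} {pY : Y → ℝ}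

theorem sum_prod_mul_prod_eq_prod (hpXY : ∀ x y, pXY x y = pYX x y * pX x)
    (hpY : ∀ y, pY y = ∑ x, pXY x y) {n : ℕ} (y : Fin n → Y) :
    ∑ x : Fin n → X, (∏ i, pX (x i)) * ∏ i, pYX (x i) (y i) = ∏ i, pY (y i) := by
  rw [sum_prod_mul_prod_s9 pX fun i z => pYX z (y i)]
  simp [hpY, hpXY, mul_comm]

variable [Fintype Y] {N HX HYX HY HXgY δ : ℝ} {n : ℕ}

/-- The chain rule `H(X|Y) = H(X) + H(Y|X) - H(Y)`. -/
theorem neg_sum_mul_logb_div_eq (b : ℝ) (hpYX0 : ∀ x y, 0 ≤ pYX x y)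
    (hpYXsum : ∀ x, ∑ y, pYX x y = 1) (hpX0 : ∀ x, 0 ≤ pX x)
    (hpXY : ∀ x y, pXY x y = pYX x y * pX x) (hpY : ∀ y, pY y = ∑ x, pXY x y) :
    -∑ x, ∑ y, pXY x y * logb b (pXY x y / pY y) =
      -∑ x, pX x * logb b (pX x) + -∑ x, ∑ y, pXY x y * logb b (pYX x y) -
        -∑ y, pY y * logb b (pY y) := by
  have hpXY0 : ∀ x y, 0 ≤ pXY x y := fun x y => hpXY x y ▸ mul_nonneg (hpYX0 x y) (hpX0 x)
  have hterm : ∀ x y, pXY x y * logb b (pXY x y / pY y) = pXY x y * logb b (pYX x y) +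
      pXY x y * logb b (pX x) - pXY x y * logb b (pY y) := by
    intro x y
    rcases eq_or_ne (pXY x y) 0 with h0 | h0
    · simp [h0]
    have hpY0 : pY y ≠ 0 := (((hpXY0 x y).lt_of_ne' h0).trans_le
      (hpY y ▸ single_le_sum (fun x' _ => hpXY0 x' y) (mem_univ x))).ne'
    rw [hpXY] at h0 ⊢
    rw [logb_div h0 hpY0, logb_mul (left_ne_zero_of_mul h0) (right_ne_zero_of_mul h0)]
    ring
  have hX : ∑ x, ∑ y, pXY x y * logb b (pX x) = ∑ x, pX x * logb b (pX x) := by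
    simp_rw [← sum_mul, hpXY, ← sum_mul, hpYXsum, one_mul]
  have hY : ∑ x, ∑ y, pXY x y * logb b (pY y) = ∑ y, pY y * logb b (pY y) := by
    rw [sum_comm]
    simp_rw [← sum_mul, ← hpY]
  simp_rw [hterm, sum_sub_distrib, sum_add_distrib, hX, hY]
  ring

noncomputable def typicalOutputs (N : ℝ) (n : ℕ) (pYX : X → Y → ℝ) (pY : Y → ℝ) (HYX HY δ : ℝ)
    (x : Fin n → X) : Finset (Fin n → Y) :=
  {y | IsTypicalWeight N n HYX δ (∏ i, pYX (x i) (y i)) ∧ IsTypicalWeight N n HY δ (∏ i, pY (y i))}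

theorem sum_prod_mul_sum_compl_typicalOutputs_le (hN : 1 < N) (hn : 0 < n) (hδ : 0 < δ)
    (hpYX0 : ∀ x y, 0 ≤ pYX x y) (hpYXsum : ∀ x, ∑ y, pYX x y = 1) (hpX0 : ∀ x, 0 ≤ pX x)
    (hpXsum : ∑ x, pX x = 1) (hpXY : ∀ x y, pXY x y = pYX x y * pX x)
    (hpY : ∀ y, pY y = ∑ x, pXY x y) (hHYX : HYX = -∑ x, ∑ y, pXY x y * logb N (pYX x y))
    (hHY : HY = -∑ y, pY y * logb N (pY y)) :
    ∑ x : Fin n → X, (∏ i, pX (x i)) *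
        ∑ y ∈ (typicalOutputs N n pYX pY HYX HY δ x)ᶜ, ∏ i, pYX (x i) (y i) ≤
      (∑ z : X × Y, pXY z.1 z.2 * (-logb N (pYX z.1 z.2) - HYX) ^ 2 +
        ∑ z : X × Y, pXY z.1 z.2 * (-logb N (pY z.2) - HY) ^ 2) / (n * δ ^ 2) := by
  have hpXY0 : ∀ z : X × Y, 0 ≤ pXY z.1 z.2 := fun z =>
    hpXY z.1 z.2 ▸ mul_nonneg (hpYX0 _ _) (hpX0 _)
  have hpXY1 : ∑ z : X × Y, pXY z.1 z.2 = 1 := by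
    simp [Fintype.sum_prod_type, hpXY, ← sum_mul, hpYXsum, hpXsum]
  have hpYX : ∀ z : X × Y, pXY z.1 z.2 ≠ 0 → 0 < pYX z.1 z.2 := fun z h =>
    (hpYX0 _ _).lt_of_ne' (left_ne_zero_of_mul (hpXY z.1 z.2 ▸ h))
  have hpY0 : ∀ z : X × Y, pXY z.1 z.2 ≠ 0 → 0 < pY z.2 := fun z h =>
    ((hpXY0 z).lt_of_ne' h).trans_le
      (hpY z.2 ▸ single_le_sum (fun x _ => hpXY0 (x, z.2)) (mem_univ z.1))
  have hHYX' : ∑ z : X × Y, pXY z.1 z.2 * -logb N (pYX z.1 z.2) = HYX := by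
    simp [hHYX, Fintype.sum_prod_type, sum_neg_distrib]
  have hHY' : ∑ z : X × Y, pXY z.1 z.2 * -logb N (pY z.2) = HY := by
    rw [hHY, Fintype.sum_prod_type, sum_comm]
    simp_rw [mul_neg, sum_neg_distrib, ← sum_mul, ← hpY]
  calc _ = ∑ ω : Fin n → X × Y with ¬(IsTypicalWeight N n HYX δ (∏ i, pYX (ω i).1 (ω i).2) ∧
          IsTypicalWeight N n HY δ (∏ i, pY (ω i).2)), ∏ i, pXY (ω i).1 (ω i).2 := by
        rw [sum_filter, ← (Equiv.arrowProdEquivProdArrow _ _ _).symm.sum_comp,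
          Fintype.sum_prod_type]
        refine sum_congr rfl fun x _ => ?_
        simp only [Equiv.arrowProdEquivProdArrow, Equiv.coe_fn_symm_mk, typicalOutputs,
          compl_filter, sum_filter, mul_sum]
        refine sum_congr rfl fun y _ => ?_
        by_cases h : IsTypicalWeight N n HYX δ (∏ i, pYX (x i) (y i)) ∧
          IsTypicalWeight N n HY δ (∏ i, pY (y i))
        · simp [h]
        · simp [h, hpXY, prod_mul_distrib, mul_comm]
    _ ≤ _ := sum_filter_not_and_le (f := fun ω : Fin n → X × Y => ∏ i, pXY (ω i).1 (ω i).2) univ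
          (fun ω => prod_nonneg fun i _ => hpXY0 _)
          (fun ω => IsTypicalWeight N n HYX δ (∏ i, pYX (ω i).1 (ω i).2))
          (fun ω => IsTypicalWeight N n HY δ (∏ i, pY (ω i).2))
    _ ≤ _ := by
        rw [add_div]
        gcongr ?_ + ?_
        · convert sum_prod_not_isTypicalWeight_le hpXY0 hpXY1 hpYX hN hHYX' hn hδ using 2
        · convert sum_prod_not_isTypicalWeight_le hpXY0 hpXY1 hpY0 hN hHY' hn hδ using 2

/-- An output `y` is typical for few typical inputs, since their joint weights with `y` add up
to at most the output probability of `y`. -/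
theorem sum_typicalOutputs_sum_le (hN : 1 < N) (hpYX0 : ∀ x y, 0 ≤ pYX x y)
    (hpYXsum : ∀ x, ∑ y, pYX x y = 1) (hpX0 : ∀ x, 0 ≤ pX x)
    (hpXY : ∀ x y, pXY x y = pYX x y * pX x) (hpY : ∀ y, pY y = ∑ x, pXY x y)
    (hchain : HXgY = HX + HYX - HY) {D : Finset (Fin n → X)}
    (hD : ∀ x ∈ D, IsTypicalWeight N n HX δ (∏ i, pX (x i))) (x : Fin n → X) :
    ∑ y ∈ typicalOutputs N n pYX pY HYX HY δ x,
        ∑ x' ∈ D with y ∈ typicalOutputs N n pYX pY HYX HY δ x', ∏ i, pYX (x' i) (y i) ≤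
      N ^ (n * (HYX + HXgY + 4 * δ)) := by
  set S := typicalOutputs N n pYX pY HYX HY δ
  have hN0 : 0 < N := by linarith
  have hW0 : ∀ (x : Fin n → X) (y : Fin n → Y), 0 ≤ ∏ i, pYX (x i) (y i) := fun x y =>
    prod_nonneg fun i _ => hpYX0 _ _
  have hW1 : ∀ x : Fin n → X, ∑ y : Fin n → Y, ∏ i, pYX (x i) (y i) = 1 := fun x =>
    sum_prod_eq_one fun i => hpYXsum (x i)
  have hcard : (#(S x) : ℝ) ≤ N ^ (n * (HYX + δ)) := by
    have hmass : ∑ y ∈ S x, ∏ i, pYX (x i) (y i) ≤ N ^ (-0 : ℝ) := by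
      rw [neg_zero, rpow_zero, ← hW1 x]
      exact sum_le_sum_of_subset_of_nonneg (subset_univ _) fun y _ _ => hW0 x y
    simpa using card_le_rpow_sub hN0 (fun y hy => (mem_filter.1 hy).2.1.1) hmass
  have hfiber : ∀ y ∈ S x, (#{x' ∈ D | y ∈ S x'} : ℝ) ≤ N ^ (n * (HXgY + 3 * δ)) := by
    intro y hy
    have hlow : ∀ x' ∈ {x' ∈ D | y ∈ S x'}, N ^ (-(n * (HX + HYX + 2 * δ))) ≤
        (∏ i, pX (x' i)) * ∏ i, pYX (x' i) (y i) := by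
      intro x' hx'
      obtain ⟨hx'D, hyx'⟩ := mem_filter.1 hx'
      rw [show -(n * (HX + HYX + 2 * δ)) = -(n * (HX + δ)) + -(n * (HYX + δ)) by ring,
        rpow_add hN0]
      exact mul_le_mul (hD x' hx'D).1 (mem_filter.1 hyx').2.1.1 (rpow_nonneg hN0.le _)
        ((rpow_nonneg hN0.le _).trans (hD x' hx'D).1)
    have hmass : ∑ x' ∈ D with y ∈ S x', (∏ i, pX (x' i)) * ∏ i, pYX (x' i) (y i) ≤
        N ^ (-(n * (HY - δ))) := by
      refine le_trans ?_ (mem_filter.1 hy).2.2.2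
      rw [← sum_prod_mul_prod_eq_prod hpXY hpY]
      exact sum_le_sum_of_subset_of_nonneg (subset_univ _) fun x' _ _ =>
        mul_nonneg (prod_nonneg fun i _ => hpX0 _) (hW0 x' y)
    convert card_le_rpow_sub hN0 hlow hmass using 2
    rw [hchain]; ring
  have hW1' : ∀ (x' : Fin n → X) (y : Fin n → Y), ∏ i, pYX (x' i) (y i) ≤ 1 := fun x' y =>
    (single_le_sum (fun y _ => hW0 x' y) (mem_univ y)).trans_eq (hW1 x')
  calc ∑ y ∈ S x, ∑ x' ∈ D with y ∈ S x', ∏ i, pYX (x' i) (y i)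
      ≤ ∑ y ∈ S x, (#{x' ∈ D | y ∈ S x'} : ℝ) :=
        sum_le_sum fun y _ => by simpa using sum_le_card_nsmul _ _ 1 fun x' _ => hW1' x' y
    _ ≤ #(S x) * N ^ (n * (HXgY + 3 * δ)) := by
        rw [← nsmul_eq_mul]; exact sum_le_card_nsmul _ _ _ hfiber
    _ ≤ N ^ (n * (HYX + δ)) * N ^ (n * (HXgY + 3 * δ)) := by gcongr
    _ = N ^ (n * (HYX + HXgY + 4 * δ)) := by rw [← rpow_add hN0]; ring_nf

theorem exists_typical_dictionary (hN : 1 < N) (hn : 0 < n) (hδ : 0 < δ)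
    (hpYX0 : ∀ x y, 0 ≤ pYX x y) (hpYXsum : ∀ x, ∑ y, pYX x y = 1) (hpX0 : ∀ x, 0 ≤ pX x)
    (hpXsum : ∑ x, pX x = 1) (hpXY : ∀ x y, pXY x y = pYX x y * pX x)
    (hpY : ∀ y, pY y = ∑ x, pXY x y) (hHX : HX = -∑ x, pX x * logb N (pX x))
    (hHYX : HYX = -∑ x, ∑ y, pXY x y * logb N (pYX x y))
    (hHY : HY = -∑ y, pY y * logb N (pY y))
    (hX : (∑ x, pX x * (-logb N (pX x) - HX) ^ 2) / (n * δ ^ 2) ≤ 1 / 4)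
    (hXY : (∑ z : X × Y, pXY z.1 z.2 * (-logb N (pYX z.1 z.2) - HYX) ^ 2 +
      ∑ z : X × Y, pXY z.1 z.2 * (-logb N (pY z.2) - HY) ^ 2) / (n * δ ^ 2) ≤ δ / 8)
    (h2 : 2 ≤ N ^ (n * δ)) :
    ∃ B : Finset (Fin n → X), N ^ (n * (HX - 2 * δ)) ≤ #B ∧
      ∀ x ∈ B, IsTypicalWeight N n HX δ (∏ i, pX (x i)) ∧
        1 - δ / 2 ≤ ∑ y ∈ typicalOutputs N n pYX pY HYX HY δ x, ∏ i, pYX (x i) (y i) := by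
  set S := typicalOutputs N n pYX pY HYX HY δ
  set e : (Fin n → X) → ℝ := fun x => ∑ y ∈ (S x)ᶜ, ∏ i, pYX (x i) (y i)
  have hN0 : 0 < N := by linarith
  have hPX0 : ∀ x : Fin n → X, 0 ≤ ∏ i, pX (x i) := fun x => prod_nonneg fun i _ => hpX0 _
  have he0 : ∀ x, 0 ≤ e x := fun x => sum_nonneg fun y _ => prod_nonneg fun i _ => hpYX0 _ _
  have hS : ∀ x, ∑ y ∈ S x, ∏ i, pYX (x i) (y i) = 1 - e x := fun x => by
    linarith [sum_compl_add_sum (S x) fun y => ∏ i, pYX (x i) (y i),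
      sum_prod_eq_one (n := n) fun i => hpYXsum (x i)]
  have hatyp :
      ∑ x : Fin n → X with ¬IsTypicalWeight N n HX δ (∏ i, pX (x i)), ∏ i, pX (x i) ≤ 1 / 4 :=
    (sum_prod_not_isTypicalWeight_le hpX0 hpXsum (fun z h => (hpX0 z).lt_of_ne' h) hN
      (by simp [hHX, sum_neg_distrib]) hn hδ).trans hX
  have hbad : ∑ x : Fin n → X with ¬e x ≤ δ / 2, ∏ i, pX (x i) ≤ 1 / 4 := by
    simp_rw [not_le]
    refine (sum_filter_lt_le_div hPX0 he0 (half_pos hδ)).trans ?_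
    rw [div_le_iff₀ (half_pos hδ)]
    linarith [(sum_prod_mul_sum_compl_typicalOutputs_le (n := n) hN hn hδ hpYX0 hpYXsum hpX0
      hpXsum hpXY hpY hHYX hHY).trans hXY]
  set B : Finset (Fin n → X) := {x | IsTypicalWeight N n HX δ (∏ i, pX (x i)) ∧ e x ≤ δ / 2}
  have hmass : 1 / 2 ≤ #B * N ^ (-(n * (HX - δ))) := by
    have hsplit := sum_filter_add_sum_filter_not univ
      (fun x => IsTypicalWeight N n HX δ (∏ i, pX (x i)) ∧ e x ≤ δ / 2) fun x => ∏ i, pX (x i)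
    have hunion := sum_filter_not_and_le univ hPX0
      (fun x => IsTypicalWeight N n HX δ (∏ i, pX (x i))) fun x => e x ≤ δ / 2
    have hup : ∑ x ∈ B, ∏ i, pX (x i) ≤ #B * N ^ (-(n * (HX - δ))) := by
      rw [← nsmul_eq_mul]
      exact sum_le_card_nsmul _ _ _ fun x hx => (mem_filter.1 hx).2.1.2
    rw [sum_prod_eq_one fun _ => hpXsum] at hsplit
    linarith
  refine ⟨B, ?_, fun x hx => ?_⟩
  · have hsmall : N ^ (-(n * δ)) ≤ 1 / 2 := by
      rw [rpow_neg hN0.le, one_div]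
      exact inv_anti₀ two_pos h2
    rw [show -(n * (HX - δ)) = -(n * (HX - 2 * δ)) + -(n * δ) by ring, rpow_add hN0,
      ← mul_assoc] at hmass
    have hB : 1 ≤ #B * N ^ (-(n * (HX - 2 * δ))) := by
      have hB0 : 0 ≤ #B * N ^ (-(n * (HX - 2 * δ))) := by positivity
      nlinarith [mul_le_mul_of_nonneg_left hsmall hB0]
    rwa [rpow_neg hN0.le, ← div_eq_mul_inv, one_le_div (rpow_pos_of_pos hN0 _)] at hB
  · obtain ⟨htyp, he⟩ := (mem_filter.1 hx).2
    exact ⟨htyp, by linarith [hS x]⟩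

theorem exists_code_of_typical_dictionary (hN : 1 < N) (hpYX0 : ∀ x y, 0 ≤ pYX x y)
    (hpYXsum : ∀ x, ∑ y, pYX x y = 1) (hpX0 : ∀ x, 0 ≤ pX x)
    (hpXY : ∀ x y, pXY x y = pYX x y * pX x) (hpY : ∀ y, pY y = ∑ x, pXY x y)
    (hchain : HXgY = HX + HYX - HY) (hδ : δ < 1) {D : Finset (Fin n → X)}
    (hD : ∀ x ∈ D, IsTypicalWeight N n HX δ (∏ i, pX (x i)) ∧
      1 - δ / 2 ≤ ∑ y ∈ typicalOutputs N n pYX pY HYX HY δ x, ∏ i, pYX (x i) (y i))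
    {m : ℕ} (hm0 : 0 < m) (hm : m * N ^ (n * (HYX + HXgY + 4 * δ)) < #D * (δ / 2)) :
    ∃ C ⊆ D, #C = m ∧ ∃ g : (Fin n → Y) → Fin n → X, (∀ y, g y ∈ C) ∧
      ∀ x ∈ C, ∑ y with g y ≠ x, ∏ i, pYX (x i) (y i) ≤ δ := by
  have hW0 : ∀ (x : Fin n → X) (y : Fin n → Y), 0 ≤ ∏ i, pYX (x i) (y i) := fun x y =>
    prod_nonneg fun i _ => hpYX0 _ _
  have hW1 : ∀ x : Fin n → X, ∑ y : Fin n → Y, ∏ i, pYX (x i) (y i) = 1 := fun x =>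
    sum_prod_eq_one fun i => hpYXsum (x i)
  exact exists_code_and_decoder (δ := δ / 2) hW0 hW1 hδ (fun x hx => (hD x hx).2)
    (rpow_nonneg (by linarith) _)
    (fun x _ => sum_typicalOutputs_sum_le hN hpYX0 hpYXsum hpX0 hpXY hpY hchain
      (fun x hx => (hD x hx).1) x) hm0 (by rwa [show δ - δ / 2 = δ / 2 by ring])

end Channel

theorem achievability_general_channels_with_dictionaries_general
    {X Y : Type} [Fintype X] [Fintype Y]
    (N : ℕ) (hN2 : 2 ≤ N)
    (pYX : X → Y → ℝ)
    (hpYXnn : ∀ x y, 0 ≤ pYX x y) (hpYXsum : ∀ x, ∑ y, pYX x y = 1)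
    (pX : X → ℝ) (hpXnn : ∀ x, 0 ≤ pX x) (hpXsum : ∑ x, pX x = 1)
    (pXY : X → Y → ℝ) (hpXY : ∀ x y, pXY x y = pYX x y * pX x)
    (pY : Y → ℝ) (hpY : ∀ y, pY y = ∑ x, pXY x y)
    (HX HYX HXgY : ℝ)
    (hHX : HX = -∑ x, pX x * Real.logb N (pX x))
    (hHYX : HYX = -∑ x, ∑ y, pXY x y * Real.logb N (pYX x y))
    (hHXgY : HXgY = -∑ x, ∑ y, pXY x y * Real.logb N (pXY x y / pY y))
    (α : ℝ)
    (ε : ℝ) (hε : 0 < ε) :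
    ∀ᶠ n in Filter.atTop,
      ∃ B : Finset (Fin n → X),
        (N : ℝ) ^ ((n : ℝ) * (HX - 2 * ε)) ≤ (B.card : ℝ) ∧
        ∀ D : Finset (Fin n → X), D ⊆ B →
          (N : ℝ) ^ ((n : ℝ) * (α - 2 * ε)) ≤ (D.card : ℝ) →
          ∀ R : ℝ, 0 < R → R < α - HYX - HXgY - 7 * ε →
            ∃ C : Finset (Fin n → X), C ⊆ D ∧
              (N : ℝ) ^ ((n : ℝ) * R) ≤ (C.card : ℝ) ∧
              ∃ g : (Fin n → Y) → (Fin n → X), (∀ y, g y ∈ C) ∧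
                ∀ x ∈ C,
                  (∑ y ∈ Finset.univ.filter fun y : Fin n → Y => g y ≠ x,
                    ∏ i, pYX (x i) (y i)) ≤ ε := by
  -- The greedy construction needs an error target below `1`, hence `δ = min ε (1 / 2)`.
  set δ := min ε (1 / 2)
  have hδ : 0 < δ := lt_min hε one_half_pos
  have hδε : δ ≤ ε := min_le_left _ _
  have hN : (1 : ℝ) < N := by exact_mod_cast hN2
  set HY := -∑ y, pY y * logb N (pY y) with hHY
  have hchain : HXgY = HX + HYX - HY := by
    rw [hHXgY, hHX, hHYX]
    exact neg_sum_mul_logb_div_eq _ hpYXnn hpYXsum hpXnn hpXY hpY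
  filter_upwards [eventually_gt_atTop 0, eventually_le_rpow_natCast_mul hN 2 hδ,
    eventually_le_rpow_natCast_mul hN (4 / δ) hδ,
    eventually_div_natCast_mul_le _ (pow_pos hδ 2) (by norm_num : (0 : ℝ) < 1 / 4),
    eventually_div_natCast_mul_le _ (pow_pos hδ 2) (by positivity : 0 < δ / 8)]
    with n hn h2 h4 hX hXY
  have hn0 : (0 : ℝ) ≤ n := n.cast_nonneg
  obtain ⟨B, hBcard, hB⟩ := exists_typical_dictionary hN hn hδ hpYXnn hpYXsum hpXnn hpXsum hpXY
    hpY hHX hHYX hHY hX hXY h2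
  refine ⟨B, (rpow_le_rpow_of_exponent_le hN.le (by nlinarith)).trans hBcard,
    fun D hDB hD R hR0 hR => ?_⟩
  have hexp : R + (HYX + HXgY + 4 * δ) + δ ≤ α - 2 * ε := by linarith
  obtain ⟨C, hCD, hCm, g, hg⟩ := exists_code_of_typical_dictionary hN hpYXnn hpYXsum hpXnn hpXY
    hpY hchain (by linarith [min_le_right ε (1 / 2)]) (fun x hx => hB x (hDB hx))
    (Nat.ceil_pos.2 (rpow_pos_of_pos (by linarith) ((n : ℝ) * R)))
    (natCeil_rpow_mul_rpow_lt hN (by positivity) hδ h4 (by nlinarith) hD)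
  exact ⟨C, hCD, hCm ▸ Nat.le_ceil _, g, hg.1, fun x hx => (hg.2 x hx).trans hδε⟩

theorem achievability_general_channels_with_dictionaries
    {X Y : Type} [Fintype X] [Fintype Y] [Nonempty X] [Nonempty Y]
    (N : ℕ) (hNcard : N = Fintype.card X) (hN2 : 2 ≤ N)
    (pYX : X → Y → ℝ)
    (hpYXnn : ∀ x y, 0 ≤ pYX x y) (hpYXsum : ∀ x, ∑ y, pYX x y = 1)
    (pX : X → ℝ) (hpXnn : ∀ x, 0 ≤ pX x) (hpXsum : ∑ x, pX x = 1)
    (pXY : X → Y → ℝ) (hpXY : ∀ x y, pXY x y = pYX x y * pX x)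
    (pY : Y → ℝ) (hpY : ∀ y, pY y = ∑ x, pXY x y)
    (HX HYX HXgY : ℝ)
    (hHX : HX = -∑ x, pX x * Real.logb N (pX x))
    (hHYX : HYX = -∑ x, ∑ y, pXY x y * Real.logb N (pYX x y))
    (hHXgY : HXgY = -∑ x, ∑ y, pXY x y * Real.logb N (pXY x y / pY y))
    (hHXpos : 0 < HX)
    (α : ℝ) (hα0 : 0 < α) (hα : α ≤ HX)
    (ε : ℝ) (hε : 0 < ε) :
    ∀ᶠ n in Filter.atTop,
      ∃ B : Finset (Fin n → X),
        (N : ℝ) ^ ((n : ℝ) * (HX - 2 * ε)) ≤ (B.card : ℝ) ∧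
        ∀ D : Finset (Fin n → X), D ⊆ B →
          (N : ℝ) ^ ((n : ℝ) * (α - 2 * ε)) ≤ (D.card : ℝ) →
          ∀ R : ℝ, 0 < R → R < α - HYX - HXgY - 7 * ε →
            ∃ C : Finset (Fin n → X), C ⊆ D ∧
              (N : ℝ) ^ ((n : ℝ) * R) ≤ (C.card : ℝ) ∧
              ∃ g : (Fin n → Y) → (Fin n → X), (∀ y, g y ∈ C) ∧
                ∀ x ∈ C,
                  (∑ y ∈ Finset.univ.filter fun y : Fin n → Y => g y ≠ x,
                    ∏ i, pYX (x i) (y i)) ≤ ε :=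
  achievability_general_channels_with_dictionaries_general N hN2 pYX hpYXnn hpYXsum pX hpXnn hpXsum
    pXY hpXY pY hpY HX HYX HXgY hHX hHYX hHXgY α ε hε
end

section
/- Let X, Y, p_{XY}, and the typical sets A_{n,1}(ε), A_n(ε) be as in the joint typicality setup, with 0 < ε < 1, and define for x ∈ A_{n,1}(ε) the set D_n(x,ε) = {y ∈ Y^n : (x,y) ∈ A_n(ε)} and A_{n,4}(ε) = {x ∈ A_{n,1}(ε) : Σ_{y ∈ D_n(x,ε)} p(y|x) ≥ 1−ε}, where p(y|x) = p(x,y)/p(x). Then for all sufficiently large n: (i) P(X^n ∈ A_{n,4}(ε)) ≥ 1−ε, and (ii) #A_{n,4}(ε) ≥ 2^{n(H(X)−2ε)}. -/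
/-!
Write `T x = ∑_{y ∈ D_n(x,ε)} p(x,y) ≤ p(x)`. Outside `A_{n,4}` one has `T x < (1-ε) p(x)`, so
`1 - ε² ≤ ∑_{A_{n,1}} T ≤ P(A_{n,4}) + (1-ε)(1 - P(A_{n,4}))`, which rearranges to
`P(A_{n,4}) ≥ 1 - ε`: a reverse Markov inequality. Every word of `A_{n,1}` has probability at most
`2^{-n(H(X)-ε)}`, so `#A_{n,4} ≥ (1-ε) 2^{n(H(X)-ε)}`, and `1 - ε ≥ 2^{-nε}` for large `n`.
-/

open scoped Classical BigOperators

open Filter Finset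

lemma le_mul_of_div_lt {t p c : ℝ} (ht : 0 ≤ t) (htp : t ≤ p) (h : t / p < c) : t ≤ c * p := by
  rcases (ht.trans htp).eq_or_lt with rfl | hp
  · simp [le_antisymm htp ht]
  · exact ((div_lt_iff₀ hp).mp h).le

theorem one_sub_le_sum_filter_of_one_sub_sq_le_sum {ι : Type*} (A : Finset ι) (p T : ι → ℝ)
    (hT : ∀ x ∈ A, 0 ≤ T x) (hTp : ∀ x ∈ A, T x ≤ p x) (hp : ∑ x ∈ A, p x ≤ 1)
    {ε : ℝ} (hε0 : 0 < ε) (hε1 : ε ≤ 1) (hA : 1 - ε ^ 2 ≤ ∑ x ∈ A, T x) :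
    1 - ε ≤ ∑ x ∈ A.filter (fun x => 1 - ε ≤ T x / p x), p x := by
  set G := A.filter fun x => 1 - ε ≤ T x / p x
  set s := ∑ x ∈ G, p x
  have hGA : G ⊆ A := filter_subset _ _
  have hT_good : ∑ x ∈ G, T x ≤ s := sum_le_sum fun x hx => hTp x (hGA hx)
  have hT_bad : ∑ x ∈ A \ G, T x ≤ (1 - ε) * ∑ x ∈ A \ G, p x := by
    rw [mul_sum]
    refine sum_le_sum fun x hx => ?_
    obtain ⟨hxA, hxG⟩ := mem_sdiff.mp hx
    exact le_mul_of_div_lt (hT x hxA) (hTp x hxA)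
      (lt_of_not_ge fun h => hxG (mem_filter.mpr ⟨hxA, h⟩))
  have hp_bad : ∑ x ∈ A \ G, p x ≤ 1 - s := by linarith [sum_sdiff hGA (f := p)]
  have hbad : (1 - ε) * ∑ x ∈ A \ G, p x ≤ (1 - ε) * (1 - s) :=
    mul_le_mul_of_nonneg_left hp_bad (by linarith)
  nlinarith [sum_sdiff hGA (f := T)]

lemma eventually_two_rpow_neg_mul_le {c a : ℝ} (hc : 0 < c) (ha : 0 < a) :
    ∀ᶠ n : ℕ in atTop, (2 : ℝ) ^ (-((n : ℝ) * c)) ≤ a := by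
  have hlim : Tendsto (fun n : ℕ => ((2 : ℝ) ^ (-c)) ^ n) atTop (nhds 0) :=
    tendsto_pow_atTop_nhds_zero_of_lt_one (by positivity)
      (Real.rpow_lt_one_of_one_lt_of_neg one_lt_two (neg_neg_of_pos hc))
  filter_upwards [hlim.eventually (ge_mem_nhds ha)] with n hn
  rwa [neg_mul_eq_mul_neg, mul_comm, Real.rpow_mul_natCast zero_le_two]

theorem typical_inputs_with_probable_outputs_general
    {X Y : Type} [Fintype X] [Fintype Y]
    (pXY : X → Y → ℝ)
    (hnn : ∀ x y, 0 ≤ pXY x y) (hsum : ∑ x, ∑ y, pXY x y = 1)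
    (pX : X → ℝ) (hpX : ∀ x, pX x = ∑ y, pXY x y)
    (pY : Y → ℝ)
    (HX HY HXY : ℝ)
    (ε : ℝ) (hε0 : 0 < ε) (hε1 : ε < 1) :
    ∀ᶠ n in Filter.atTop,
      -- word probabilities
      let pnX : (Fin n → X) → ℝ := fun x => ∏ i, pX (x i)
      let pnY : (Fin n → Y) → ℝ := fun y => ∏ i, pY (y i)
      let pn : (Fin n → X) → (Fin n → Y) → ℝ := fun x y => ∏ i, pXY (x i) (y i)
      -- typical sets
      let A1 : Finset (Fin n → X) := Finset.univ.filter fun x =>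
        (2 : ℝ) ^ (-((n : ℝ) * (HX + ε))) ≤ pnX x ∧
          pnX x ≤ (2 : ℝ) ^ (-((n : ℝ) * (HX - ε)))
      let A2 : Finset (Fin n → Y) := Finset.univ.filter fun y =>
        (2 : ℝ) ^ (-((n : ℝ) * (HY + ε))) ≤ pnY y ∧
          pnY y ≤ (2 : ℝ) ^ (-((n : ℝ) * (HY - ε)))
      let A3 : (Fin n → X) → (Fin n → Y) → Prop := fun x y =>
        (2 : ℝ) ^ (-((n : ℝ) * (HXY + ε))) ≤ pn x y ∧
          pn x y ≤ (2 : ℝ) ^ (-((n : ℝ) * (HXY - ε)))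
      -- probable output set of x : D_n(x,ε) = {y : (x,y) ∈ A_n(ε)}
      let Dn : (Fin n → X) → Finset (Fin n → Y) := fun x =>
        A2.filter fun y => A3 x y
      -- A_{n,4}(ε)
      let A4 : Finset (Fin n → X) := A1.filter fun x =>
        1 - ε ≤ ∑ y ∈ Dn x, pn x y / pnX x
      -- assuming P((X^n,Y^n) ∈ A_n(ε)) ≥ 1 - ε²
      (1 - ε ^ 2 ≤ ∑ x ∈ A1, ∑ y ∈ Dn x, pn x y) →
        (1 - ε ≤ ∑ x ∈ A4, pnX x) ∧
          (2 : ℝ) ^ ((n : ℝ) * (HX - 2 * ε)) ≤ (A4.card : ℝ) := by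
  filter_upwards [eventually_two_rpow_neg_mul_le hε0 (sub_pos.mpr hε1)] with n hn
  intro pnX pnY pn A1 A2 A3 Dn A4 hP
  have hpn : ∀ x y, 0 ≤ pn x y := fun x y => prod_nonneg fun i _ => hnn _ _
  have hmarg : ∀ x, ∑ y, pn x y = pnX x := fun x => by
    simp only [pn, pnX, hpX, Fintype.prod_sum]
  have hpX0 : ∀ x, 0 ≤ pX x := fun x => (hpX x).symm ▸ sum_nonneg fun y _ => hnn x y
  have htotal : ∑ x, pnX x = 1 := by
    rw [← one_pow n, ← hsum, ← sum_congr rfl fun x _ => hpX x, Fintype.sum_pow]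
  have hprob : 1 - ε ≤ ∑ x ∈ A4, pnX x := by
    have := one_sub_le_sum_filter_of_one_sub_sq_le_sum A1 pnX (fun x => ∑ y ∈ Dn x, pn x y)
      (fun x _ => sum_nonneg fun y _ => hpn x y)
      (fun x _ => hmarg x ▸ sum_le_sum_of_subset_of_nonneg (subset_univ _) fun y _ _ => hpn x y)
      (htotal ▸ sum_le_sum_of_subset_of_nonneg (subset_univ _) fun x _ _ =>
        prod_nonneg fun i _ => hpX0 _)
      hε0 hε1.le hP
    simpa only [sum_div] using this
  refine ⟨hprob, ?_⟩
  have hcard : ∑ x ∈ A4, pnX x ≤ A4.card * (2 : ℝ) ^ (-((n : ℝ) * (HX - ε))) := by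
    rw [← nsmul_eq_mul]
    exact sum_le_card_nsmul _ _ _ fun x hx => (mem_filter.mp (filter_subset _ _ hx)).2.2
  have hsplit : (2 : ℝ) ^ ((n : ℝ) * (HX - 2 * ε)) =
      2 ^ (-((n : ℝ) * ε)) / 2 ^ (-((n : ℝ) * (HX - ε))) := by
    rw [← Real.rpow_sub two_pos]
    ring_nf
  rw [hsplit, div_le_iff₀ (by positivity)]
  linarith

theorem typical_inputs_with_probable_outputs
    {X Y : Type} [Fintype X] [Fintype Y] [Nonempty X] [Nonempty Y]
    (pXY : X → Y → ℝ)
    (hnn : ∀ x y, 0 ≤ pXY x y) (hsum : ∑ x, ∑ y, pXY x y = 1)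
    (pX : X → ℝ) (hpX : ∀ x, pX x = ∑ y, pXY x y)
    (pY : Y → ℝ) (hpY : ∀ y, pY y = ∑ x, pXY x y)
    (HX HY HXY : ℝ)
    (hHX : HX = -∑ x, pX x * Real.logb 2 (pX x))
    (hHY : HY = -∑ y, pY y * Real.logb 2 (pY y))
    (hHXY : HXY = -∑ x, ∑ y, pXY x y * Real.logb 2 (pXY x y))
    (hHXpos : 0 < HX) (hHYpos : 0 < HY) (hHXYpos : 0 < HXY)
    (ε : ℝ) (hε0 : 0 < ε) (hε1 : ε < 1) :
    ∀ᶠ n in Filter.atTop,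
      -- word probabilities
      let pnX : (Fin n → X) → ℝ := fun x => ∏ i, pX (x i)
      let pnY : (Fin n → Y) → ℝ := fun y => ∏ i, pY (y i)
      let pn : (Fin n → X) → (Fin n → Y) → ℝ := fun x y => ∏ i, pXY (x i) (y i)
      -- typical sets
      let A1 : Finset (Fin n → X) := Finset.univ.filter fun x =>
        (2 : ℝ) ^ (-((n : ℝ) * (HX + ε))) ≤ pnX x ∧
          pnX x ≤ (2 : ℝ) ^ (-((n : ℝ) * (HX - ε)))
      let A2 : Finset (Fin n → Y) := Finset.univ.filter fun y =>
        (2 : ℝ) ^ (-((n : ℝ) * (HY + ε))) ≤ pnY y ∧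
          pnY y ≤ (2 : ℝ) ^ (-((n : ℝ) * (HY - ε)))
      let A3 : (Fin n → X) → (Fin n → Y) → Prop := fun x y =>
        (2 : ℝ) ^ (-((n : ℝ) * (HXY + ε))) ≤ pn x y ∧
          pn x y ≤ (2 : ℝ) ^ (-((n : ℝ) * (HXY - ε)))
      -- probable output set of x : D_n(x,ε) = {y : (x,y) ∈ A_n(ε)}
      let Dn : (Fin n → X) → Finset (Fin n → Y) := fun x =>
        A2.filter fun y => A3 x y
      -- A_{n,4}(ε)
      let A4 : Finset (Fin n → X) := A1.filter fun x =>
        1 - ε ≤ ∑ y ∈ Dn x, pn x y / pnX x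
      -- assuming P((X^n,Y^n) ∈ A_n(ε)) ≥ 1 - ε²
      (1 - ε ^ 2 ≤ ∑ x ∈ A1, ∑ y ∈ Dn x, pn x y) →
        (1 - ε ≤ ∑ x ∈ A4, pnX x) ∧
          (2 : ℝ) ^ ((n : ℝ) * (HX - 2 * ε)) ≤ (A4.card : ℝ) :=
  typical_inputs_with_probable_outputs_general pXY hnn hsum pX hpX pY HX HY HXY ε hε0 hε1
end
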